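/- arXiv:0906.3197 — 2 statements merged into one kernel-verified Lean document; each statement's English description precedes it below -/
import Mathlib

section
/- Let X be a set, σ : X → X, D a type, P : X → (X → D) → Prop, and define A(c)(x) = (c(x).1-part unchanged, bit updated to xor(bit(x), bit(σ x)) if P x (first components of c) holds, else unchanged). If A(c) = A(c') and c(x₀) ≠ c'(x₀), and the first (D-)components of c and c' agree everywhere, then P holds at σᵏ(x₀) (with respect to the common D-component) for every natural number k. -/
theorem conditional_xor_noninjective_orbit_correct {X D : Type*} (σ : X → X)
    (P : X → (X → D) → Prop) [∀ x d, Decidable (P x d)]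
    (A : (X → D × Bool) → (X → D × Bool))
    (hA : ∀ c x, A c x =
      ((c x).1, if P x (fun y => (c y).1) then Bool.xor (c x).2 ((c (σ x)).2)
        else (c x).2))
    (c c' : X → D × Bool)
    (heq : A c = A c') (x₀ : X) (hdiff : c x₀ ≠ c' x₀)
    (hD : ∀ x, (c x).1 = (c' x).1) :
    ∀ k : ℕ, P (σ^[k] x₀) (fun y => (c y).1) := by
  have hfun : (fun y => (c y).1) = fun y => (c' y).1 := funext hD
  have key : ∀ x, c x ≠ c' x → P x (fun y => (c y).1) ∧ c (σ x) ≠ c' (σ x) := by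
    intro x hx
    have h1 : A c x = A c' x := congrFun heq x
    rw [hA, hA, ← hfun] at h1
    have hbit : (c x).2 ≠ (c' x).2 := by
      intro h2
      exact hx (Prod.ext (hD x) h2)
    by_cases hP : P x (fun y => (c y).1)
    · refine ⟨hP, ?_⟩
      simp only [hP, if_true] at h1
      have h2 := congrArg Prod.snd h1
      simp only at h2
      intro h3
      apply hbit
      have : (c (σ x)).2 = (c' (σ x)).2 := by rw [h3]
      rw [this] at h2
      cases hb : (c' (σ x)).2 <;> cases hbx : (c x).2 <;> cases hbx' : (c' x).2 <;>
        simp_all [Bool.xor]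
    · exfalso
      simp only [hP, if_false] at h1
      exact hbit (congrArg Prod.snd h1)
  have main : ∀ k : ℕ, c (σ^[k] x₀) ≠ c' (σ^[k] x₀) ∧
      P (σ^[k] x₀) (fun y => (c y).1) := by
    intro k
    induction k with
    | zero => exact ⟨hdiff, (key x₀ hdiff).1⟩
    | succ n ih =>
      have h := (key _ ih.1).2
      rw [Function.iterate_succ_apply']
      exact ⟨h, (key _ h).1⟩
  exact fun k => (main k).2
end

section
/- Let X be a set, σ : X → X, and suppose every forward orbit of σ is infinite, in the sense that σ is injective and σᵏ(x) ≠ x for all x and all k ≥ 1. Let G(c)(x) = xor(c(x), c(σ(x))). If c ≠ c' and G(c) = G(c'), then the set {x ∈ X | c(x) ≠ c'(x)} is infinite. -/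
theorem xor_noninjective_infinite_difference {X : Type*} (σ : X → X)
    (hinj : Function.Injective σ)
    (hper : ∀ (x : X) (k : ℕ), 1 ≤ k → σ^[k] x ≠ x)
    (c c' : X → Bool) (hne : c ≠ c')
    (heq : (fun x => Bool.xor (c x) (c (σ x))) = fun x => Bool.xor (c' x) (c' (σ x))) :
    {x : X | c x ≠ c' x}.Infinite := by
  obtain ⟨x0, hx0⟩ : ∃ x, c x ≠ c' x := by
    by_contra h; push_neg at h; exact hne (funext h)
  have step : ∀ x, c x ≠ c' x → c (σ x) ≠ c' (σ x) := by
    intro x hx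
    have hx' := congrFun heq x
    intro h
    apply hx
    cases hc : c x <;> cases hc' : c' x <;> simp_all [Bool.xor]
  have horb : ∀ n, c (σ^[n] x0) ≠ c' (σ^[n] x0) := by
    intro n; induction n with
    | zero => exact hx0
    | succ n ih => rw [Function.iterate_succ_apply']; exact step _ ih
  have hinjn : Function.Injective (fun n => σ^[n] x0) := by
    intro m n hmn
    by_contra hne'
    simp only [] at hmn
    wlog h : m < n generalizing m n
    · exact this hmn.symm (Ne.symm hne') (by omega)
    · have h2 : σ^[m] (σ^[n-m] x0) = σ^[m] x0 := by
        rw [← Function.iterate_add_apply, show m + (n-m) = n by omega]; exact hmn.symm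
      exact hper x0 (n-m) (by omega) (hinj.iterate m h2)
  exact Set.infinite_of_injective_forall_mem hinjn horb
end
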